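/- For $s \in (1/2,1)$, $n \ge 1$, $x \in [0,1)$: $\int_1^\infty \frac{r^{2s-n-3}}{(r^2-1)^s}\,{}_2F_1\big(\tfrac n2+1-s,\,2-s;\,\tfrac n2\,\big|\,\tfrac{x^2}{r^2}\big)\,dr = \frac{\Gamma(\frac n2)}{2\,\Gamma(\frac n2+1-s)\,(1-s)} \sum_{k=0}^{\infty}\frac{(\frac n2+k)\,\Gamma(2-s+k)}{\frac n2+k+1-s}\,\frac{x^{2k}}{k!}$, and consequently $\frac{\Gamma(\frac n2+1)\,\Gamma(1-s)}{2\,\Gamma(\frac n2+2-s)}(1-x^2)^{s-2} \le \int_1^\infty \frac{r^{2s-n-3}}{(r^2-1)^s}\,{}_2F_1\big(\tfrac n2+1-s,2-s;\tfrac n2\big|\tfrac{x^2}{r^2}\big)\,dr \le \frac{\Gamma(\frac n2)\,\Gamma(1-s)}{2\,\Gamma(\frac n2+1-s)}(1-x^2)^{s-2}$. -/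

import Mathlib

/-!
Expanding `₂F₁` termwise, the `k`-th term of the integrand is a nonnegative multiple of
`r ^ (1 - 2 (p + q)) (r² - 1) ^ (q - 1)` with `p = n/2 + 1 + k`, `q = 1 - s`; the substitution
`u = r⁻²` turns its integral into half the Beta integral `B(p, q)`. Nonnegativity lets the sum
and the integral be exchanged, and the Gamma factors collapse to the stated series. That series is
`∑ w_k Γ(2 - s + k) x^{2k} / k!` with weights `w_k = (n/2 + k) / (n/2 + k + 1 - s)` in
`[n / (n + 2 - 2s), 1]`, so both bounds follow from the binomial series
`∑ Γ(2 - s + k) x^{2k} / k! = Γ(2 - s) (1 - x²) ^ (s - 2)`.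
-/

open Real MeasureTheory

lemma Real.Gamma_add_nat_eq_eval_ascPochhammer_mul {a : ℝ} (ha : 0 < a) (n : ℕ) :
    Gamma (a + n) = (ascPochhammer ℝ n).eval a * Gamma a := by
  induction n with
  | zero => simp
  | succ n ih =>
    rw [Nat.cast_succ, ← add_assoc, Gamma_add_one (by positivity), ih, ascPochhammer_succ_right,
      Polynomial.eval_mul]
    simp only [Polynomial.eval_add, Polynomial.eval_X, Polynomial.eval_natCast]
    ring

lemma ringChoose_add_sub_one_eq_Gamma_div {a : ℝ} (ha : 0 < a) (n : ℕ) :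
    Ring.choose (a + n - 1) n = Gamma (a + n) / (Gamma a * n.factorial) := by
  have h := Ring.factorial_nsmul_multichoose_eq_ascPochhammer a n
  rw [Polynomial.ascPochhammer_smeval_eq_eval, Ring.multichoose_eq, nsmul_eq_mul] at h
  rw [Real.Gamma_add_nat_eq_eval_ascPochhammer_mul ha, ← h]
  have := (Gamma_pos_of_pos ha).ne'
  field_simp

theorem hasSum_Gamma_add_mul_pow_div_factorial {a y : ℝ} (ha : 0 < a) (hy : |y| < 1) :
    HasSum (fun k : ℕ => Gamma (a + k) * y ^ k / k.factorial) (Gamma a * (1 - y) ^ (-a)) := by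
  have h := (one_div_one_sub_rpow_hasFPowerSeriesOnBall_zero a).hasSum
    (y := y) (by simpa [edist_dist] using hy)
  simp only [FormalMultilinearSeries.ofScalars_apply_eq, ringChoose_add_sub_one_eq_Gamma_div ha,
    smul_eq_mul, zero_add] at h
  have hG := (Gamma_pos_of_pos ha).ne'
  rw [rpow_neg (by linarith [le_abs_self y]), ← one_div]
  refine (h.mul_left (Gamma a)).congr_fun fun k => ?_
  field_simp

lemma ofReal_rpow_mul_one_sub_rpow {u : ℝ} (hu : u ∈ Set.Icc (0 : ℝ) 1) (p q : ℝ) :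
    ((u ^ (p - 1) * (1 - u) ^ (q - 1) : ℝ) : ℂ)
      = (u : ℂ) ^ ((p : ℂ) - 1) * (1 - (u : ℂ)) ^ ((q : ℂ) - 1) := by
  rw [Complex.ofReal_mul, Complex.ofReal_cpow hu.1, Complex.ofReal_cpow (sub_nonneg.2 hu.2)]
  push_cast
  rfl

lemma integrableOn_rpow_mul_one_sub_rpow {p q : ℝ} (hp : 0 < p) (hq : 0 < q) :
    IntegrableOn (fun u : ℝ => u ^ (p - 1) * (1 - u) ^ (q - 1)) (Set.Ioo 0 1) := by
  have h := Complex.betaIntegral_convergent (u := p) (v := q) (by simpa) (by simpa)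
  rw [intervalIntegrable_iff_integrableOn_Ioo_of_le zero_le_one] at h
  refine IntegrableOn.congr_fun h.re (fun u hu => ?_) measurableSet_Ioo
  rw [← ofReal_rpow_mul_one_sub_rpow (Set.Ioo_subset_Icc_self hu), RCLike.re_to_complex,
    Complex.ofReal_re]

lemma integral_rpow_mul_one_sub_rpow {p q : ℝ} (hp : 0 < p) (hq : 0 < q) :
    ∫ u in Set.Ioo (0 : ℝ) 1, u ^ (p - 1) * (1 - u) ^ (q - 1)
      = Gamma p * Gamma q / Gamma (p + q) := by
  have h := Complex.betaIntegral_eq_Gamma_mul_div p q (by simpa) (by simpa)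
  rw [Complex.betaIntegral, intervalIntegral.integral_of_le zero_le_one,
    integral_Ioc_eq_integral_Ioo, ← setIntegral_congr_fun measurableSet_Ioo
      fun u hu => ofReal_rpow_mul_one_sub_rpow (Set.Ioo_subset_Icc_self hu) p q,
    integral_complex_ofReal, ← Complex.ofReal_add, Complex.Gamma_ofReal, Complex.Gamma_ofReal,
    Complex.Gamma_ofReal] at h
  exact_mod_cast h

lemma image_rpow_neg_two_Ioi_one : (fun r : ℝ => r ^ (-2 : ℝ)) '' Set.Ioi 1 = Set.Ioo 0 1 := by
  ext u
  constructor
  · rintro ⟨r, hr, rfl⟩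
    exact ⟨rpow_pos_of_pos (zero_lt_one.trans hr) _,
      rpow_lt_one_of_one_lt_of_neg hr (by norm_num)⟩
  · rintro ⟨hu0, hu1⟩
    refine ⟨u ^ (-2⁻¹ : ℝ), one_lt_rpow_of_pos_of_lt_one_of_neg hu0 hu1 (by norm_num), ?_⟩
    simp only [← rpow_mul hu0.le]
    norm_num

lemma hasDerivWithinAt_rpow_neg_two {r : ℝ} (hr : r ∈ Set.Ioi (1 : ℝ)) :
    HasDerivWithinAt (fun r : ℝ => r ^ (-2 : ℝ)) (-2 * r ^ (-3 : ℝ)) (Set.Ioi 1) r := by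
  have h := hasDerivAt_rpow_const (p := -2) (Or.inl (zero_lt_one.trans hr).ne')
  rw [show (-2 : ℝ) - 1 = -3 by norm_num] at h
  exact h.hasDerivWithinAt

lemma injOn_rpow_neg_two : Set.InjOn (fun r : ℝ => r ^ (-2 : ℝ)) (Set.Ioi 1) :=
  (strictAntiOn_rpow_Ioi_of_exponent_neg (by norm_num)).injOn.mono
    (Set.Ioi_subset_Ioi zero_le_one)

lemma abs_mul_rpow_neg_two_substitution {p q r : ℝ} (hr : 1 < r) :
    |-2 * r ^ (-3 : ℝ)| • ((r ^ (-2 : ℝ)) ^ (p - 1) * (1 - r ^ (-2 : ℝ)) ^ (q - 1))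
      = 2 * (r ^ (1 - 2 * (p + q)) * (r ^ 2 - 1) ^ (q - 1)) := by
  have hr0 : 0 < r := zero_lt_one.trans hr
  have hsq : 0 ≤ r ^ 2 - 1 := by nlinarith
  have hsub : 1 - r ^ (-2 : ℝ) = (r ^ 2 - 1) * r ^ (-2 : ℝ) := by
    rw [rpow_neg hr0.le, rpow_two]
    field_simp
  have hexp :
      r ^ (1 - 2 * (p + q)) = r ^ (-3 : ℝ) * r ^ (-2 * (p - 1)) * r ^ (-2 * (q - 1)) := by
    rw [← rpow_add hr0, ← rpow_add hr0]
    ring_nf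
  rw [hsub, mul_rpow hsq (rpow_nonneg hr0.le _), ← rpow_mul hr0.le, ← rpow_mul hr0.le, hexp,
    smul_eq_mul, abs_mul, abs_of_neg (by norm_num : (-2 : ℝ) < 0),
    abs_of_pos (rpow_pos_of_pos hr0 _)]
  ring

theorem integrableOn_Ioi_one_rpow_mul_sq_sub_one_rpow {p q : ℝ} (hp : 0 < p) (hq : 0 < q) :
    IntegrableOn (fun r : ℝ => r ^ (1 - 2 * (p + q)) * (r ^ 2 - 1) ^ (q - 1)) (Set.Ioi 1) := by
  have h := integrableOn_rpow_mul_one_sub_rpow hp hq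
  rw [← image_rpow_neg_two_Ioi_one, integrableOn_image_iff_integrableOn_abs_deriv_smul
    measurableSet_Ioi (fun r hr => hasDerivWithinAt_rpow_neg_two hr) injOn_rpow_neg_two] at h
  refine IntegrableOn.congr_fun (h.const_mul 2⁻¹) (fun r hr => ?_) measurableSet_Ioi
  rw [abs_mul_rpow_neg_two_substitution hr]
  ring

theorem integral_Ioi_one_rpow_mul_sq_sub_one_rpow {p q : ℝ} (hp : 0 < p) (hq : 0 < q) :
    ∫ r in Set.Ioi (1 : ℝ), r ^ (1 - 2 * (p + q)) * (r ^ 2 - 1) ^ (q - 1)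
      = Gamma p * Gamma q / (2 * Gamma (p + q)) := by
  have h := integral_rpow_mul_one_sub_rpow hp hq
  rw [← image_rpow_neg_two_Ioi_one, integral_image_eq_integral_abs_deriv_smul
    measurableSet_Ioi (fun r hr => hasDerivWithinAt_rpow_neg_two hr) injOn_rpow_neg_two,
    setIntegral_congr_fun measurableSet_Ioi fun r hr => abs_mul_rpow_neg_two_substitution hr,
    integral_const_mul] at h
  rw [div_mul_eq_div_div_swap, ← h]
  ring

theorem hasSum_integral_of_nonneg {α ι : Type*} [MeasurableSpace α] [Countable ι]
    {μ : Measure α} {F : ι → α → ℝ} (hF_int : ∀ i, Integrable (F i) μ)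
    (hF_nonneg : ∀ i, 0 ≤ᵐ[μ] F i)
    (hF_sum : Summable fun i => ∫ a, F i a ∂μ) :
    HasSum (fun i => ∫ a, F i a ∂μ) (∫ a, ∑' i, F i a ∂μ) := by
  refine hasSum_integral_of_summable_integral_norm hF_int (hF_sum.congr fun i => ?_)
  refine integral_congr_ae ?_
  filter_upwards [hF_nonneg i] with a ha
  exact (Real.norm_of_nonneg ha).symm

lemma summable_mul_of_mem_Icc {w g : ℕ → ℝ} {m : ℝ} (hg : Summable g)
    (hg0 : ∀ k, 0 ≤ g k) (hm : 0 ≤ m) (hw : ∀ k, w k ∈ Set.Icc m 1) :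
    Summable fun k => w k * g k :=
  hg.of_nonneg_of_le (fun k => mul_nonneg (hm.trans (hw k).1) (hg0 k))
    fun k => mul_le_of_le_one_left (hg0 k) (hw k).2

lemma tsum_mul_mem_Icc {w g : ℕ → ℝ} {m G : ℝ} (hg : HasSum g G) (hg0 : ∀ k, 0 ≤ g k)
    (hm : 0 ≤ m) (hw : ∀ k, w k ∈ Set.Icc m 1) :
    ∑' k, w k * g k ∈ Set.Icc (m * G) G := by
  have hwg := (summable_mul_of_mem_Icc hg.summable hg0 hm hw).hasSum
  exact ⟨hasSum_le (fun k => mul_le_mul_of_nonneg_right (hw k).1 (hg0 k)) (hg.mul_left m) hwg,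
    hasSum_le (fun k => mul_le_of_le_one_left (hg0 k) (hw k).2) hwg hg⟩

noncomputable def gammaHypergeometric (a b c z : ℝ) : ℝ :=
  Gamma c / (Gamma a * Gamma b) *
    ∑' k : ℕ, Gamma (a + k) * Gamma (b + k) / Gamma (c + k) * z ^ k / (Nat.factorial k)

section

variable {c s x : ℝ}

lemma div_add_one_sub_mem_Icc (hc : 0 < c) (hs : s < 1) (k : ℕ) :
    (c + k) / (c + k + 1 - s) ∈ Set.Icc (c / (c + 1 - s)) 1 := by
  have hk : (0 : ℝ) ≤ k := k.cast_nonneg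
  constructor
  · rw [div_le_div_iff₀ (by linarith) (by linarith)]
    nlinarith
  · rw [div_le_one (by linarith)]
    linarith

lemma weighted_Gamma_series_term_eq (k : ℕ) :
    (c + k) * Gamma (2 - s + k) / (c + k + 1 - s) * x ^ (2 * k) / k.factorial
      = (c + k) / (c + k + 1 - s) * (Gamma (2 - s + k) * (x ^ 2) ^ k / k.factorial) := by
  rw [← pow_mul]
  ring

lemma Gamma_series_term_nonneg (hs : s < 1) (k : ℕ) :
    0 ≤ Gamma (2 - s + k) * (x ^ 2) ^ k / k.factorial := by
  have := Gamma_pos_of_pos (by linarith [k.cast_nonneg (α := ℝ)] : 0 < 2 - s + k)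
  positivity

lemma hasSum_Gamma_series (hs : s < 1) (hx : x ^ 2 < 1) :
    HasSum (fun k : ℕ => Gamma (2 - s + k) * (x ^ 2) ^ k / k.factorial)
      (Gamma (2 - s) * (1 - x ^ 2) ^ (s - 2)) := by
  have h := hasSum_Gamma_add_mul_pow_div_factorial (a := 2 - s) (y := x ^ 2) (by linarith)
    (by rwa [abs_of_nonneg (sq_nonneg x)])
  rwa [neg_sub] at h

lemma summable_weighted_Gamma_series (hc : 0 < c) (hs : s < 1) (hx : x ^ 2 < 1) :
    Summable fun k : ℕ =>
      (c + k) * Gamma (2 - s + k) / (c + k + 1 - s) * x ^ (2 * k) / k.factorial := by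
  simp only [weighted_Gamma_series_term_eq]
  exact summable_mul_of_mem_Icc (hasSum_Gamma_series hs hx).summable (Gamma_series_term_nonneg hs)
    (div_nonneg hc.le (by linarith)) (div_add_one_sub_mem_Icc hc hs)

lemma tsum_weighted_Gamma_series_mem_Icc (hc : 0 < c) (hs : s < 1) (hx : x ^ 2 < 1) :
    ∑' k : ℕ, (c + k) * Gamma (2 - s + k) / (c + k + 1 - s) * x ^ (2 * k) / k.factorial
      ∈ Set.Icc (c / (c + 1 - s) * (Gamma (2 - s) * (1 - x ^ 2) ^ (s - 2)))
        (Gamma (2 - s) * (1 - x ^ 2) ^ (s - 2)) := by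
  simp only [weighted_Gamma_series_term_eq]
  exact tsum_mul_mem_Icc (hasSum_Gamma_series hs hx) (Gamma_series_term_nonneg hs)
    (div_nonneg hc.le (by linarith)) (div_add_one_sub_mem_Icc hc hs)

lemma rpow_div_rpow_mul_div_sq_pow {r : ℝ} (hr : 1 < r) (k : ℕ) :
    r ^ (2 * s - 2 * c - 3) / (r ^ 2 - 1) ^ s * (x ^ 2 / r ^ 2) ^ k
      = x ^ (2 * k) * (r ^ (1 - 2 * (c + 1 + k + (1 - s))) * (r ^ 2 - 1) ^ (1 - s - 1)) := by
  have hr0 : 0 < r := zero_lt_one.trans hr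
  have hexp : r ^ (1 - 2 * (c + 1 + k + (1 - s))) = r ^ (2 * s - 2 * c - 3) / (r ^ 2) ^ k := by
    rw [← pow_mul, ← rpow_natCast, ← rpow_sub hr0]
    push_cast
    ring_nf
  rw [hexp, sub_sub_cancel_left, rpow_neg (by nlinarith), div_pow, ← pow_mul]
  ring

lemma Gamma_coeff_mul_integral_eq (hc : 0 < c) (hs : s < 1) (k : ℕ) :
    Gamma c / (Gamma (c + 1 - s) * Gamma (2 - s))
        * (Gamma (c + 1 - s + k) * Gamma (2 - s + k) / Gamma (c + k)) * x ^ (2 * k) / k.factorial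
        * (Gamma (c + 1 + k) * Gamma (1 - s) / (2 * Gamma (c + 1 + k + (1 - s))))
      = Gamma c / (2 * Gamma (c + 1 - s) * (1 - s))
        * ((c + k) * Gamma (2 - s + k) / (c + k + 1 - s) * x ^ (2 * k) / k.factorial) := by
  have hk : (0 : ℝ) ≤ k := k.cast_nonneg
  rw [show c + 1 + k = (c + k) + 1 by ring, Gamma_add_one (by linarith),
    show c + k + 1 + (1 - s) = (c + 1 - s + k) + 1 by ring, Gamma_add_one (by linarith),
    show 2 - s = (1 - s) + 1 by ring, Gamma_add_one (by linarith)]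
  have := Gamma_pos_of_pos hc
  have := Gamma_pos_of_pos (by linarith : 0 < 1 - s)
  have := Gamma_pos_of_pos (by linarith : 0 < c + 1 - s)
  have := Gamma_pos_of_pos (by linarith : 0 < c + k)
  have := Gamma_pos_of_pos (by linarith : 0 < c + 1 - s + k)
  have : 0 < c + k + 1 - s := by linarith
  have : 0 < c + 1 - s + k := by linarith
  have : 0 < 1 - s := by linarith
  field_simp
  ring

theorem integral_rpow_mul_gammaHypergeometric (hc : 0 < c) (hs : s < 1) (hx : x ^ 2 < 1) :
    ∫ r in Set.Ioi (1 : ℝ),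
        r ^ (2 * s - 2 * c - 3) / (r ^ 2 - 1) ^ s
          * gammaHypergeometric (c + 1 - s) (2 - s) c (x ^ 2 / r ^ 2)
      = Gamma c / (2 * Gamma (c + 1 - s) * (1 - s)) *
          ∑' k : ℕ,
            (c + k) * Gamma (2 - s + k) / (c + k + 1 - s) * x ^ (2 * k) / k.factorial := by
  set A : ℕ → ℝ := fun k => Gamma c / (Gamma (c + 1 - s) * Gamma (2 - s))
    * (Gamma (c + 1 - s + k) * Gamma (2 - s + k) / Gamma (c + k)) * x ^ (2 * k) / k.factorial
  set K : ℕ → ℝ → ℝ := fun k r =>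
    r ^ (1 - 2 * (c + 1 + k + (1 - s))) * (r ^ 2 - 1) ^ (1 - s - 1)
  have hk : ∀ k : ℕ, (0 : ℝ) ≤ k := fun k => k.cast_nonneg
  have hA : ∀ k, 0 ≤ A k := fun k => by
    have := Gamma_pos_of_pos hc
    have := Gamma_pos_of_pos (by linarith : 0 < c + 1 - s)
    have := Gamma_pos_of_pos (by linarith : 0 < 2 - s)
    have := Gamma_pos_of_pos (by linarith [hk k] : 0 < c + 1 - s + k)
    have := Gamma_pos_of_pos (by linarith [hk k] : 0 < 2 - s + k)
    have := Gamma_pos_of_pos (by linarith [hk k] : 0 < c + k)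
    have := (even_two_mul k).pow_nonneg x
    simp only [A]
    positivity
  have hK_int : ∀ k, IntegrableOn (K k) (Set.Ioi 1) := fun k =>
    integrableOn_Ioi_one_rpow_mul_sq_sub_one_rpow (by linarith [hk k]) (by linarith)
  have hK_nonneg : ∀ k, ∀ r ∈ Set.Ioi (1 : ℝ), 0 ≤ K k r := fun k r (hr : 1 < r) =>
    mul_nonneg (rpow_nonneg (by linarith) _) (rpow_nonneg (by nlinarith) _)
  have hterm : ∀ k, ∫ r in Set.Ioi (1 : ℝ), A k * K k r
      = Gamma c / (2 * Gamma (c + 1 - s) * (1 - s))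
        * ((c + k) * Gamma (2 - s + k) / (c + k + 1 - s) * x ^ (2 * k) / k.factorial) := fun k => by
    rw [integral_const_mul, integral_Ioi_one_rpow_mul_sq_sub_one_rpow (by linarith [hk k])
      (by linarith), Gamma_coeff_mul_integral_eq hc hs]
  have hexpand : ∀ r ∈ Set.Ioi (1 : ℝ), r ^ (2 * s - 2 * c - 3) / (r ^ 2 - 1) ^ s
      * gammaHypergeometric (c + 1 - s) (2 - s) c (x ^ 2 / r ^ 2) = ∑' k, A k * K k r := by
    intro r hr
    rw [gammaHypergeometric, ← mul_assoc, ← tsum_mul_left]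
    refine tsum_congr fun k => ?_
    linear_combination (Gamma c / (Gamma (c + 1 - s) * Gamma (2 - s))
      * (Gamma (c + 1 - s + k) * Gamma (2 - s + k) / Gamma (c + k)) / k.factorial)
      * rpow_div_rpow_mul_div_sq_pow (c := c) (s := s) (x := x) hr k
  have hsum := hasSum_integral_of_nonneg (fun k => (hK_int k).const_mul (A k))
    (fun k => (ae_restrict_iff' measurableSet_Ioi).2 (.of_forall fun r hr =>
      mul_nonneg (hA k) (hK_nonneg k r hr)))
    (by simp only [hterm]; exact (summable_weighted_Gamma_series hc hs hx).mul_left _)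
  rw [setIntegral_congr_fun measurableSet_Ioi hexpand, ← hsum.tsum_eq, tsum_congr hterm,
    tsum_mul_left]

theorem integral_rpow_mul_gammaHypergeometric_mem_Icc (hc : 0 < c) (hs : s < 1)
    (hx : x ^ 2 < 1) :
    ∫ r in Set.Ioi (1 : ℝ),
        r ^ (2 * s - 2 * c - 3) / (r ^ 2 - 1) ^ s
          * gammaHypergeometric (c + 1 - s) (2 - s) c (x ^ 2 / r ^ 2)
      ∈ Set.Icc (Gamma (c + 1) * Gamma (1 - s) / (2 * Gamma (c + 2 - s)) * (1 - x ^ 2) ^ (s - 2))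
        (Gamma c * Gamma (1 - s) / (2 * Gamma (c + 1 - s)) * (1 - x ^ 2) ^ (s - 2)) := by
  obtain ⟨hlower, hupper⟩ := tsum_weighted_Gamma_series_mem_Icc hc hs hx
  have h1s : 0 < 1 - s := by linarith
  have hcs : 0 < c + 1 - s := by linarith
  have hGc := Gamma_pos_of_pos hc
  have hGcs := Gamma_pos_of_pos hcs
  have hG1s := Gamma_pos_of_pos h1s
  have hGamma_two_sub : Gamma (2 - s) = (1 - s) * Gamma (1 - s) := by
    rw [show 2 - s = (1 - s) + 1 by ring, Gamma_add_one h1s.ne']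
  have hGamma_add_two_sub : Gamma (c + 2 - s) = (c + 1 - s) * Gamma (c + 1 - s) := by
    rw [show c + 2 - s = (c + 1 - s) + 1 by ring, Gamma_add_one hcs.ne']
  have hD : 0 ≤ Gamma c / (2 * Gamma (c + 1 - s) * (1 - s)) := by positivity
  rw [integral_rpow_mul_gammaHypergeometric hc hs hx]
  constructor
  · convert mul_le_mul_of_nonneg_left hlower hD using 1
    rw [Gamma_add_one hc.ne', hGamma_add_two_sub, hGamma_two_sub]
    field_simp
  · convert mul_le_mul_of_nonneg_left hupper hD using 1
    rw [hGamma_two_sub]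
    field_simp

end

theorem stmt18 (n : ℕ) (hn : 1 ≤ n) (s x : ℝ)
    (hs : s ∈ Set.Ioo (1/2 : ℝ) 1) (hx : x ∈ Set.Ico (0:ℝ) 1)
    (F : ℝ → ℝ → ℝ → ℝ → ℝ)
    (hF : ∀ a b c z, F a b c z = Real.Gamma c / (Real.Gamma a * Real.Gamma b) *
      ∑' k : ℕ, Real.Gamma (a + k) * Real.Gamma (b + k) / Real.Gamma (c + k)
        * z ^ k / (Nat.factorial k)) :
    (∫ r in Set.Ioi (1:ℝ),
        r ^ (2*s - (n:ℝ) - 3) / (r^2 - 1) ^ s * F ((n:ℝ)/2 + 1 - s) (2 - s) ((n:ℝ)/2) (x^2/r^2))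
      = Real.Gamma ((n:ℝ)/2) / (2 * Real.Gamma ((n:ℝ)/2 + 1 - s) * (1 - s)) *
          ∑' k : ℕ, ((n:ℝ)/2 + k) * Real.Gamma (2 - s + k) / ((n:ℝ)/2 + k + 1 - s)
            * x ^ (2*k) / (Nat.factorial k) ∧
    Real.Gamma ((n:ℝ)/2 + 1) * Real.Gamma (1 - s) / (2 * Real.Gamma ((n:ℝ)/2 + 2 - s))
        * (1 - x^2) ^ (s - 2)
      ≤ (∫ r in Set.Ioi (1:ℝ),
          r ^ (2*s - (n:ℝ) - 3) / (r^2 - 1) ^ s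
            * F ((n:ℝ)/2 + 1 - s) (2 - s) ((n:ℝ)/2) (x^2/r^2)) ∧
    (∫ r in Set.Ioi (1:ℝ),
        r ^ (2*s - (n:ℝ) - 3) / (r^2 - 1) ^ s * F ((n:ℝ)/2 + 1 - s) (2 - s) ((n:ℝ)/2) (x^2/r^2))
      ≤ Real.Gamma ((n:ℝ)/2) * Real.Gamma (1 - s) / (2 * Real.Gamma ((n:ℝ)/2 + 1 - s))
          * (1 - x^2) ^ (s - 2) := by
  have hc : 0 < (n : ℝ) / 2 := half_pos (Nat.cast_pos.2 hn)
  have hx2 : x ^ 2 < 1 := by nlinarith [hx.1, hx.2]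
  have hF' : F = gammaHypergeometric := by funext a b c z; exact hF a b c z
  have hn2 : 2 * ((n : ℝ) / 2) = n := by ring
  have heq := integral_rpow_mul_gammaHypergeometric hc hs.2 hx2
  have hmem := integral_rpow_mul_gammaHypergeometric_mem_Icc hc hs.2 hx2
  rw [hn2] at heq hmem
  subst hF'
  exact ⟨heq, hmem⟩
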